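/- Assume the ensemble setup. For all n, k, p ≥ 1, only walks traversing every edge at least twice contribute: μ_{k,p}^{(n)} = n^{-(k/2+1)}·∑_{w ∈ Ŵ_{k,p}^{(n)}} E[∏_{j ∈ ZMod k} a w(j) w(j+1)]; equivalently, every closed walk w of length k that traverses some edge exactly once satisfies E[∏_{j ∈ ZMod k} a w(j) w(j+1)] = 0. -/

import Mathlib

open MeasureTheory ProbabilityTheory Filter

/-- The random matrix `A_n` with entries `a i j / √n` (indices in `{1,…,n}`). -/
noncomputable def matA {Ω : Type} (a : ℕ → ℕ → Ω → ℝ) (n : ℕ) (ω : Ω) :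
    Matrix (Fin n) (Fin n) ℝ :=
  Matrix.of fun u v => a (u.1 + 1) (v.1 + 1) ω / Real.sqrt n

/-- The `k`-th spectral moment `m_k^{(n)} = (1/n)·trace(A_n^k)`. -/
noncomputable def specMom {Ω : Type} (a : ℕ → ℕ → Ω → ℝ) (n k : ℕ) (ω : Ω) : ℝ :=
  (1 / (n : ℝ)) * Matrix.trace ((matA a n ω) ^ k)

/-- The `k`-th expected spectral moment `m̄_k^{(n)} = E[m_k^{(n)}]`. -/
noncomputable def expSpecMom {Ω : Type} [MeasurableSpace Ω] (P : Measure Ω)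
    (a : ℕ → ℕ → Ω → ℝ) (n k : ℕ) : ℝ :=
  ∫ ω, specMom a n k ω ∂P

/-- `σ̂_n = max_{1 ≤ i ≤ n} σ i`. -/
noncomputable def sigHat (σ : ℕ → ℝ) (n : ℕ) : ℝ := sSup (σ '' Set.Icc 1 n)

/-- `σ̌_n = min_{1 ≤ i ≤ n} σ i`. -/
noncomputable def sigCheck (σ : ℕ → ℝ) (n : ℕ) : ℝ := sInf (σ '' Set.Icc 1 n)

/-- Number of times the closed walk `w : ZMod k → Fin n` traverses the unordered edge `e`. -/
noncomputable def edgeCount (k n : ℕ) (e : Sym2 (Fin n)) (w : ZMod k → Fin n) : ℕ :=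
  Nat.card {j : ZMod k // s(w j, w (j + 1)) = e}

/-- Closed walks of length `k` on `Fin n` visiting exactly `p` distinct vertices. -/
def Wset (k n p : ℕ) : Set (ZMod k → Fin n) := {w | Nat.card (Set.range w) = p}

/-- Walks in `Wset k n p` that traverse each of their edges at least twice. -/
def WhatSet (k n p : ℕ) : Set (ZMod k → Fin n) :=
  {w ∈ Wset k n p | ∀ e : Sym2 (Fin n), 1 ≤ edgeCount k n e w → 2 ≤ edgeCount k n e w}

open Classical in
/-- `μ_{k,p}^{(n)} = n^{−(k/2+1)} ∑_{w ∈ W_{k,p}} E[∏_j a_{w(j) w(j+1)}]`. -/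
noncomputable def muW {Ω : Type} [MeasurableSpace Ω] (P : Measure Ω)
    (a : ℕ → ℕ → Ω → ℝ) (k p n : ℕ) (hk : k ≠ 0) : ℝ :=
  haveI : NeZero k := ⟨hk⟩
  (n : ℝ) ^ (-((k : ℝ) / 2 + 1)) *
    ∑ w : ZMod k → Fin n,
      if w ∈ Wset k n p then
        ∫ ω, ∏ j : ZMod k, a ((w j).1 + 1) ((w (j + 1)).1 + 1) ω ∂P
      else 0

/-
A closed walk that crosses an edge exactly once contributes zero: after grouping the factors of
`∏_j a_{w(j) w(j+1)}` by edge, the product is a monomial `∏_e a_e ^ N(e,w)` in independent entries,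
so its expectation factorises as `∏_e E[a_e ^ N(e,w)]`, and the factor of an edge with
`N(e,w) = 1` is `E[a_e] = 0`.
-/

theorem ProbabilityTheory.iIndepFun.integral_prod_comp_eq_zero {Ω ι κ : Type*}
    [MeasurableSpace Ω] {μ : Measure Ω} [Fintype κ] {f : ι → Ω → ℝ}
    (hf : iIndepFun f μ) (hmeas : ∀ i, AEMeasurable (f i) μ) (q : κ → ι) {j₀ : κ}
    (hj₀ : ∀ j, q j = q j₀ → j = j₀) (hmean : ∫ ω, f (q j₀) ω ∂μ = 0) :
    ∫ ω, ∏ j, f (q j) ω ∂μ = 0 := by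
  classical
  let S := Finset.univ.image q
  let m : ι → ℕ := fun i => (Finset.univ.filter fun j => q j = i).card
  have hmonomial : ∀ ω, ∏ j, f (q j) ω = ∏ i : S, f i ω ^ m i := fun ω => by
    rw [Finset.prod_comp (fun i => f i ω) q, ← Finset.prod_coe_sort]
  have hm₀ : m (q j₀) = 1 := by
    rw [Finset.card_eq_one]
    exact ⟨j₀, Finset.ext fun j => by simpa using ⟨hj₀ j, fun h => h ▸ rfl⟩⟩
  have hS : iIndepFun (fun i : S => f i) μ := hf.precomp Subtype.val_injective
  have hfactor : ∫ ω, ∏ i : S, f i ω ^ m i ∂μ = ∏ i : S, ∫ ω, f i ω ^ m i ∂μ :=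
    hS.integral_fun_prod_comp (fun i => hmeas i)
      (fun i => (continuous_pow (m i)).aestronglyMeasurable)
  simp only [hmonomial, hfactor]
  refine Finset.prod_eq_zero (i := ⟨q j₀, Finset.mem_image_of_mem q (Finset.mem_univ j₀)⟩)
    (Finset.mem_univ _) ?_
  simpa [hm₀] using hmean

def edgeIndex {n : ℕ} : Sym2 (Fin n) → {q : ℕ × ℕ // 1 ≤ q.1 ∧ q.1 ≤ q.2} :=
  Sym2.lift ⟨fun u v => ⟨(min (u.1 + 1) (v.1 + 1), max (u.1 + 1) (v.1 + 1)), by omega⟩,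
    fun u v => by simp only [min_comm, max_comm]⟩

theorem edgeIndex_injective {n : ℕ} : Function.Injective (edgeIndex (n := n)) := by
  intro e e' h
  induction e using Sym2.ind with | h u v => ?_
  induction e' using Sym2.ind with | h u' v' => ?_
  simp only [edgeIndex, Sym2.lift_mk, Subtype.mk.injEq, Prod.mk.injEq] at h
  have : (u.1 = u'.1 ∧ v.1 = v'.1) ∨ (u.1 = v'.1 ∧ v.1 = u'.1) := by omega
  rcases this with ⟨hu, hv⟩ | ⟨hu, hv⟩
  · exact Sym2.eq_iff.2 (Or.inl ⟨Fin.ext hu, Fin.ext hv⟩)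
  · exact Sym2.eq_iff.2 (Or.inr ⟨Fin.ext hu, Fin.ext hv⟩)

theorem apply_eq_apply_edgeIndex {α : Type*} {a : ℕ → ℕ → α} (hsymm : ∀ i j, a i j = a j i)
    {n : ℕ} (u v : Fin n) :
    a (u.1 + 1) (v.1 + 1) = a (edgeIndex s(u, v)).1.1 (edgeIndex s(u, v)).1.2 := by
  rcases le_total (u.1 + 1) (v.1 + 1) with h | h
  · simp only [edgeIndex, Sym2.lift_mk, min_eq_left h, max_eq_right h]
  · simp only [edgeIndex, Sym2.lift_mk, min_eq_right h, max_eq_left h]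
    exact hsymm _ _

theorem integral_walk_prod_eq_zero_of_edgeCount_eq_one {Ω : Type} [MeasurableSpace Ω]
    {P : Measure Ω} {a : ℕ → ℕ → Ω → ℝ} (hmeas : ∀ i j, Measurable (a i j))
    (hsymm : ∀ i j, a i j = a j i)
    (hindep : iIndepFun
      (fun q : {q : ℕ × ℕ // 1 ≤ q.1 ∧ q.1 ≤ q.2} => a q.1.1 q.1.2) P)
    (hmean : ∀ i j, 1 ≤ i → 1 ≤ j → ∫ ω, a i j ω ∂P = 0)
    {n k : ℕ} [NeZero k] {w : ZMod k → Fin n} {e : Sym2 (Fin n)}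
    (he : edgeCount k n e w = 1) :
    ∫ ω, ∏ j : ZMod k, a ((w j).1 + 1) ((w (j + 1)).1 + 1) ω ∂P = 0 := by
  obtain ⟨⟨j₀, hj₀⟩, huniq⟩ := Nat.card_eq_one_iff_exists.1 he
  simp_rw [apply_eq_apply_edgeIndex hsymm]
  refine hindep.integral_prod_comp_eq_zero (fun i => (hmeas _ _).aemeasurable)
    (fun j => edgeIndex s(w j, w (j + 1))) (j₀ := j₀) (fun j hj => ?_) ?_
  · exact congrArg Subtype.val (huniq ⟨j, (edgeIndex_injective hj).trans hj₀⟩)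
  · have hq := (edgeIndex s(w j₀, w (j₀ + 1))).2
    exact hmean _ _ hq.1 (hq.1.trans hq.2)

open Classical in
/-- **Only walks traversing every edge at least twice contribute**:
`μ_{k,p} = n^{−(k/2+1)} ∑_{w ∈ Ŵ_{k,p}} E[∏_j a_{w(j)w(j+1)}]`; equivalently, a closed walk
traversing some edge exactly once has vanishing expected product. -/
theorem mu_eq_sum_over_what {Ω : Type} [MeasurableSpace Ω]
    (P : Measure Ω)
    (a : ℕ → ℕ → Ω → ℝ)
    (hmeas : ∀ i j, Measurable (a i j))
    (hsymm : ∀ i j, a i j = a j i)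
    (hindep : iIndepFun
      (fun q : {q : ℕ × ℕ // 1 ≤ q.1 ∧ q.1 ≤ q.2} => a q.1.1 q.1.2) P)
    (hmean : ∀ i j, 1 ≤ i → 1 ≤ j → ∫ ω, a i j ω ∂P = 0)
    (n k p : ℕ) (hk : 1 ≤ k) :
    letI : NeZero k := ⟨by omega⟩
    (muW P a k p n (by omega) =
      (n : ℝ) ^ (-((k : ℝ) / 2 + 1)) *
        ∑ w : ZMod k → Fin n,
          if w ∈ WhatSet k n p then
            ∫ ω, ∏ j : ZMod k, a ((w j).1 + 1) ((w (j + 1)).1 + 1) ω ∂P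
          else 0) ∧
    (∀ w : ZMod k → Fin n, (∃ e : Sym2 (Fin n), edgeCount k n e w = 1) →
      ∫ ω, ∏ j : ZMod k, a ((w j).1 + 1) ((w (j + 1)).1 + 1) ω ∂P = 0) := by
  have : NeZero k := ⟨by omega⟩
  have hsingle : ∀ w : ZMod k → Fin n, (∃ e : Sym2 (Fin n), edgeCount k n e w = 1) →
      ∫ ω, ∏ j : ZMod k, a ((w j).1 + 1) ((w (j + 1)).1 + 1) ω ∂P = 0 :=
    fun w ⟨_, he⟩ => integral_walk_prod_eq_zero_of_edgeCount_eq_one hmeas hsymm hindep hmean he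
  refine ⟨?_, hsingle⟩
  rw [muW]
  congr 1
  refine Finset.sum_congr rfl fun w _ => ?_
  by_cases hWh : w ∈ WhatSet k n p
  · rw [if_pos hWh.1, if_pos hWh]
  by_cases hW : w ∈ Wset k n p
  · rw [if_pos hW, if_neg hWh]
    refine hsingle w ?_
    by_contra! hnone
    exact hWh ⟨hW, fun e he => by have := hnone e; omega⟩
  · rw [if_neg hW, if_neg hWh]
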